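/- arXiv:1108.5781 — 4 statements merged into one kernel-verified Lean document; each statement's English description precedes it below -/
import Mathlib

section
/- (Lemma 'Distance Estimator'.) For every t ≥ 0, ∑_{i∈Φ} ∑_{j∈Φ} ν_i π_i (exp(tQ))_{ij} ν_j = e^{−t}. Equivalently, if F^{ab} is the matrix with entries F_{ij} = π_i (exp(tQ))_{ij}, then ν^⊤ F^{ab} ν = e^{−t}; this is the statement E[e^{−τ̂(a,b)}] = e^{−τ(a,b)} for two leaves at evolutionary distance t. -/
/-!
The whole content is that `ν` is an eigenvector of `exp (tQ)` with eigenvalue `e^{-t}`: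
summing the exponential series termwise gives `exp (tQ) ν = e^{-t} ν`, so the double sum
collapses to `e^{-t} ∑ π_i ν_i² = e^{-t}`.
-/

open scoped BigOperators

/-- The matrix exponential of a real `Φ × Φ` matrix. -/
noncomputable def matExp {Φ : Type*} [Fintype Φ] [DecidableEq Φ] (A : Matrix Φ Φ ℝ) :
    Matrix Φ Φ ℝ := NormedSpace.exp A

attribute [local instance] Matrix.linftyOpNormedRing Matrix.linftyOpNormedAlgebra

namespace Matrix

variable {n : Type*} [Fintype n]

theorem pow_mulVec_of_mulVec_eq_smul {R : Type*} [CommSemiring R] [DecidableEq n]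
    {A : Matrix n n R} {v : n → R} {c : R} (h : A *ᵥ v = c • v) (k : ℕ) :
    (A ^ k) *ᵥ v = c ^ k • v := by
  induction k with
  | zero => simp
  | succ k ih => rw [pow_succ', ← mulVec_mulVec, ih, mulVec_smul, h, smul_smul, pow_succ]

theorem exp_mulVec_of_mulVec_eq_smul {𝕂 : Type*} [RCLike 𝕂] [DecidableEq n]
    {A : Matrix n n 𝕂} {v : n → 𝕂} {c : 𝕂} (h : A *ᵥ v = c • v) :
    NormedSpace.exp A *ᵥ v = NormedSpace.exp c • v := by
  have hA : HasSum (fun k => ((k.factorial⁻¹ : 𝕂) • A ^ k) *ᵥ v) (NormedSpace.exp A *ᵥ v) :=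
    (NormedSpace.exp_series_hasSum_exp' A).map (mulVec.addMonoidHomLeft v)
      (continuous_id.matrix_mulVec continuous_const)
  have hc : HasSum (fun k => ((k.factorial⁻¹ : 𝕂) • A ^ k) *ᵥ v) (NormedSpace.exp c • v) := by
    convert (NormedSpace.exp_series_hasSum_exp' (𝕂 := 𝕂) (𝔸 := 𝕂) c).smul_const v using 2 with k
    rw [smul_mulVec, pow_mulVec_of_mulVec_eq_smul h, smul_smul, smul_eq_mul]
  exact hA.unique hc

theorem sum_sum_mul_of_mulVec_eq_smul {R : Type*} [CommSemiring R] {M : Matrix n n R}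
    {v : n → R} {c : R} (h : M *ᵥ v = c • v) (w : n → R) :
    ∑ i, ∑ j, v i * w i * M i j * v j = c * ∑ i, w i * v i ^ 2 := by
  have hrow : ∀ i, ∑ j, M i j * v j = c * v i := fun i => by
    simpa [mulVec, dotProduct] using congrFun h i
  simp_rw [mul_assoc, ← Finset.mul_sum, hrow, Finset.mul_sum]
  exact Finset.sum_congr rfl fun i _ => by ring

end Matrix

theorem distance_estimator_unbiased_general {Φ : Type*} [Fintype Φ] [DecidableEq Φ]
    (Q : Matrix Φ Φ ℝ) (π ν : Φ → ℝ)
    (hν : Q.mulVec ν = -ν)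
    (hnorm : ∑ i : Φ, π i * ν i ^ 2 = 1) :
    ∀ t : ℝ, 0 ≤ t →
      ∑ i : Φ, ∑ j : Φ, ν i * π i * (matExp (t • Q)) i j * ν j = Real.exp (-t) := by
  intro t _
  have heig : (t • Q).mulVec ν = (-t) • ν := by
    rw [Matrix.smul_mulVec, hν, smul_neg, neg_smul]
  have hexp : (matExp (t • Q)).mulVec ν = Real.exp (-t) • ν := by
    rw [matExp, Real.exp_eq_exp_ℝ]
    exact Matrix.exp_mulVec_of_mulVec_eq_smul heig
  rw [Matrix.sum_sum_mul_of_mulVec_eq_smul hexp, hnorm, mul_one]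

/-- (Distance Estimator.) For a GTR rate matrix `Q` reversible w.r.t. `π`, with second
right eigenvector `ν` (`Qν = −ν`) normalized so that `∑ π_i ν_i² = 1`, for every `t ≥ 0`,
`∑_i ∑_j ν_i π_i (exp(tQ))_{ij} ν_j = e^{−t}`, i.e. `E[e^{−τ̂(a,b)}] = e^{−τ(a,b)}`. -/
theorem distance_estimator_unbiased {Φ : Type*} [Fintype Φ] [DecidableEq Φ]
    (hcard : 2 ≤ Fintype.card Φ)
    (Q : Matrix Φ Φ ℝ) (π ν : Φ → ℝ)
    (hQoff : ∀ i j, i ≠ j → 0 < Q i j)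
    (hQrow : ∀ i, ∑ j : Φ, Q i j = 0)
    (hπpos : ∀ i, 0 < π i)
    (hπsum : ∑ i : Φ, π i = 1)
    (hrev : ∀ i j, π i * Q i j = π j * Q j i)
    (hν : Q.mulVec ν = -ν)
    (hnorm : ∑ i : Φ, π i * ν i ^ 2 = 1) :
    ∀ t : ℝ, 0 ≤ t →
      ∑ i : Φ, ∑ j : Φ, ν i * π i * (matExp (t • Q)) i j * ν j = Real.exp (-t) :=
  distance_estimator_unbiased_general Q π ν hν hnorm
end

section
/- (Proposition 'Weighted Majority: GTR Version', mean part.) For every integer h ≥ 1, every edge-weight assignment with τ_v > 0 for all nonempty v, and every unit flow Ψ: (i) for each i ∈ Φ, ∑_{x : V → Φ, x_ρ = i} P(x) S(x) = π_i ν_i (i.e., E[S | ξ_ρ = i] = ν_i); and (ii) ∑_{x : V → Φ} P(x) S(x) = 0 (i.e., E[S] = 0). -/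
open scoped BigOperators

/-- Sum of edge weights along the ancestor path of `v` (heap indexing of the binary
tree: vertices are positive integers, the root is `1`, and the parent of `v ≥ 2` is
`v / 2`), stopping at (and excluding) the ancestor `a`.  This is `τ(a, v)`. -/
noncomputable def pathSum (τ : ℕ → ℝ) (a : ℕ) (v : ℕ) : ℝ :=
  if _h : v ≤ a then 0 else τ v + pathSum τ a (v / 2)
termination_by v
decreasing_by omega

/-- Lowest common ancestor (longest common prefix) of two same-level vertices in heap
indexing. -/
def lca (a b : ℕ) : ℕ :=
  if a = b then a else lca (a / 2) (b / 2)
termination_by a + b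
decreasing_by omega

/-- Tree distance `τ(a,b) = τ(c,a) + τ(c,b)` where `c` is the longest common prefix of
the same-level vertices `a` and `b`. -/
noncomputable def treeDist (τ : ℕ → ℝ) (a b : ℕ) : ℝ :=
  pathSum τ (lca a b) a + pathSum τ (lca a b) b

/-- Interpret a heap-index vertex `v ∈ {1, …, 2^{h+1} − 1}` of the complete binary tree
of depth `h` as an index into configurations (binary strings of length `m ≤ h`
correspond to the integers in `[2^m, 2^{m+1})`). -/
def idx (h v : ℕ) : Fin (2 ^ (h + 1) - 1) :=
  ⟨(v - 1) % (2 ^ (h + 1) - 1), Nat.mod_lt _ (by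
    have : 2 ^ 1 ≤ 2 ^ (h + 1) := Nat.pow_le_pow_right (by norm_num) (by omega)
    omega)⟩

/-- The GTR law on the complete binary tree of depth `h`: the probability
`P(x) = π(x_ρ) ∏_{v nonempty} (exp(τ_v Q))_{x_{parent(v)}, x_v}` of a configuration
`x` (configurations assign a state to each of the `2^{h+1} − 1` vertices). -/
noncomputable def gtrP {Φ : Type*} [Fintype Φ] [DecidableEq Φ]
    (h : ℕ) (π : Φ → ℝ) (Q : Matrix Φ Φ ℝ) (τ : ℕ → ℝ)
    (x : Fin (2 ^ (h + 1) - 1) → Φ) : ℝ :=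
  π (x (idx h 1)) *
    ∏ v ∈ Finset.Ico 2 (2 ^ (h + 1)),
      (matExp (τ v • Q)) (x (idx h (v / 2))) (x (idx h v))

/-- The estimator `S(x) = ∑_{ℓ leaf} Ψ(ℓ) ν_{x_ℓ} / Θ_{ρ,ℓ}` with `Θ_{ρ,ℓ} = e^{−τ(ρ,ℓ)}`. -/
noncomputable def estS {Φ : Type*} [Fintype Φ] [DecidableEq Φ]
    (h : ℕ) (ν : Φ → ℝ) (τ Ψ : ℕ → ℝ) (x : Fin (2 ^ (h + 1) - 1) → Φ) : ℝ :=
  ∑ ℓ ∈ Finset.Ico (2 ^ h) (2 ^ (h + 1)),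
    Ψ ℓ * ν (x (idx h ℓ)) * Real.exp (pathSum τ 1 ℓ)

/-- `K_Ψ = ∑_{v nonempty} (1 − e^{−2τ_v}) e^{2τ(ρ,v)} Ψ(v)²`. -/
noncomputable def Kflow (h : ℕ) (τ Ψ : ℕ → ℝ) : ℝ :=
  ∑ v ∈ Finset.Ico 2 (2 ^ (h + 1)),
    (1 - Real.exp (-(2 * τ v))) * Real.exp (2 * pathSum τ 1 v) * Ψ v ^ 2

/-- `Ψ` is a unit flow from the root to the leaves of the depth-`h` tree: nonnegative,
`Ψ(ρ) = 1`, and `Ψ(v) = Ψ(v0) + Ψ(v1)` for internal vertices. -/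
def IsUnitFlow (h : ℕ) (Ψ : ℕ → ℝ) : Prop :=
  Ψ 1 = 1 ∧ (∀ v, 1 ≤ v → v < 2 ^ (h + 1) → 0 ≤ Ψ v) ∧
    ∀ v, 1 ≤ v → v < 2 ^ h → Ψ v = Ψ (2 * v) + Ψ (2 * v + 1)

/-!
Conditionally on the root state `i`, the state at a leaf `ℓ` has the law of row `i` of the
product of the matrices `exp(τ_v Q)` along the root–leaf path. Each factor has `ν` as an
eigenvector with eigenvalue `e^{-τ_v}`, so `E[ν(ξ_ℓ) | ξ_ρ = i] = e^{-τ(ρ,ℓ)} ν_i`, which exactly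
cancels the weight `1 / Θ_{ρ,ℓ}` in `S`. Hence `E[S | ξ_ρ = i] = ν_i ∑_ℓ Ψ(ℓ) = ν_i`, a unit flow
having total mass one on every level. Averaging over the root gives `E[S] = ∑_i π_i ν_i`, which
vanishes because reversibility makes `π` stationary (`π Q = 0`) while `Q ν = -ν`.

The leaf marginal is computed by summing out the vertices in decreasing heap order: a vertex off
the path to `ℓ` contributes a row sum `1` of its transition matrix, one on the path a factor
`e^{-τ_v}`.
-/

open Matrix Finset

theorem matExp_mulVec_of_mulVec_eq_smul {Φ : Type*} [Fintype Φ] [DecidableEq Φ]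
    {A : Matrix Φ Φ ℝ} {v : Φ → ℝ} {c : ℝ} (hv : A *ᵥ v = c • v) :
    matExp A *ᵥ v = Real.exp c • v := by
  let _ := Matrix.linftyOpNormedRing (n := Φ) (α := ℝ)
  let _ : NormedAlgebra ℝ (Matrix Φ Φ ℝ) := Matrix.linftyOpNormedAlgebra
  have hpow (n : ℕ) : (A ^ n) *ᵥ v = c ^ n • v := by
    induction n with
    | zero => simp
    | succ n ih =>
      rw [pow_succ', ← mulVec_mulVec, ih, mulVec_smul, hv, smul_smul, ← pow_succ]
  have hA := (NormedSpace.exp_series_hasSum_exp' (𝕂 := ℝ) A).mapL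
    (LinearMap.toContinuousLinearMap (LinearMap.applyₗ v ∘ₗ Matrix.toLin'.toLinearMap))
  simp only [LinearMap.coe_toContinuousLinearMap', LinearMap.coe_comp, Function.comp_apply,
    LinearEquiv.coe_coe, toLin'_apply, LinearMap.applyₗ_apply_apply, map_smul] at hA
  have hc := (NormedSpace.expSeries_div_hasSum_exp (𝔸 := ℝ) c).smul_const v
  rw [← Real.exp_eq_exp_ℝ] at hc
  refine hA.unique ?_
  simpa only [hpow, smul_smul, div_eq_inv_mul] using hc

section RateMatrix

variable {Φ : Type*} [Fintype Φ] {Q : Matrix Φ Φ ℝ}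

theorem mulVec_one_of_rowSum_eq_zero (hrow : ∀ i, ∑ j, Q i j = 0) : Q *ᵥ 1 = 0 := by
  ext i
  simpa [mulVec, dotProduct] using hrow i

theorem vecMul_eq_zero_of_reversible {π : Φ → ℝ} (hrow : ∀ i, ∑ j, Q i j = 0)
    (hrev : ∀ i j, π i * Q i j = π j * Q j i) : π ᵥ* Q = 0 := by
  ext j
  simp only [vecMul, dotProduct, hrev _ j, ← mul_sum, hrow, mul_zero, Pi.zero_apply]

theorem dotProduct_eq_zero_of_mulVec_eq_neg {π ν : Φ → ℝ} (hπ : π ᵥ* Q = 0)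
    (hν : Q *ᵥ ν = -ν) : π ⬝ᵥ ν = 0 := by
  have := dotProduct_mulVec π Q ν
  rw [hν, hπ, dotProduct_neg, zero_dotProduct] at this
  exact neg_eq_zero.mp this

variable [DecidableEq Φ]

theorem matExp_smul_mulVec_one (hrow : ∀ i, ∑ j, Q i j = 0) (t : ℝ) :
    matExp (t • Q) *ᵥ 1 = 1 := by
  have h0 : (t • Q) *ᵥ 1 = (0 : ℝ) • 1 := by
    rw [smul_mulVec, mulVec_one_of_rowSum_eq_zero hrow, smul_zero, zero_smul]
  simpa using matExp_mulVec_of_mulVec_eq_smul h0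

theorem matExp_smul_mulVec_of_mulVec_eq_neg {ν : Φ → ℝ} (hν : Q *ᵥ ν = -ν) (t : ℝ) :
    matExp (t • Q) *ᵥ ν = Real.exp (-t) • ν :=
  matExp_mulVec_of_mulVec_eq_smul (by rw [smul_mulVec, hν, smul_neg, neg_smul])

end RateMatrix

theorem card_mul_sum_eq_sum_sum {ι Φ : Type*} [Fintype ι] [DecidableEq ι] [Fintype Φ]
    (k : ι) {H : (ι → Φ) → Φ → ℝ} (hH : ∀ x c d, H (Function.update x k c) d = H x d) :
    Fintype.card Φ * ∑ x, H x (x k) = ∑ x, ∑ c, H x c := by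
  have hswap : Function.Involutive fun p : (ι → Φ) × Φ => (Function.update p.1 k p.2, p.1 k) :=
    fun p => by simp
  calc Fintype.card Φ * ∑ x, H x (x k)
      = ∑ p : (ι → Φ) × Φ, H p.1 (p.1 k) := by
        rw [Fintype.sum_prod_type, sum_comm]; simp
    _ = ∑ p : (ι → Φ) × Φ, H (Function.update p.1 k p.2) p.2 := by
        rw [← Equiv.sum_comp hswap.toPerm]
        simp
    _ = ∑ x, ∑ c, H x c := by rw [Fintype.sum_prod_type]; simp [hH]

theorem idx_injOn (h : ℕ) : Set.InjOn (idx h) (Set.Ico 1 (2 ^ (h + 1))) := by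
  intro v ⟨hv, hv'⟩ w ⟨hw, hw'⟩ hvw
  have hvw := congrArg Fin.val hvw
  simp only [idx] at hvw
  rw [Nat.mod_eq_of_lt (by omega), Nat.mod_eq_of_lt (by omega)] at hvw
  omega

theorem pathSum_one_one (τ : ℕ → ℝ) : pathSum τ 1 1 = 0 := by
  simp [pathSum]

theorem pathSum_one_of_two_le (τ : ℕ → ℝ) {v : ℕ} (hv : 2 ≤ v) :
    pathSum τ 1 v = τ v + pathSum τ 1 (v / 2) := by
  rw [pathSum, dif_neg (by omega)]

/-- The deepest ancestor of `ℓ` (possibly `ℓ` itself) among the heap vertices below `m`. -/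
def ancBelow (m ℓ : ℕ) : ℕ :=
  if ℓ ≤ 1 ∨ ℓ < m then ℓ else ancBelow m (ℓ / 2)
termination_by ℓ
decreasing_by omega

theorem ancBelow_of_lt {m ℓ : ℕ} (hℓ : ℓ < m) : ancBelow m ℓ = ℓ := by
  simp [ancBelow, hℓ]

theorem ancBelow_of_le {m ℓ : ℕ} (hℓ : 2 ≤ ℓ) (hmℓ : m ≤ ℓ) :
    ancBelow m ℓ = ancBelow m (ℓ / 2) := by
  rw [ancBelow, if_neg (by omega)]

theorem ancBelow_two {ℓ : ℕ} (hℓ : 1 ≤ ℓ) : ancBelow 2 ℓ = 1 := by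
  induction ℓ using Nat.strong_induction_on with
  | _ ℓ ih =>
    rw [ancBelow]
    split_ifs with h
    · omega
    · exact ih _ (by omega) (by omega)

theorem ancBelow_mem_Ico {m ℓ : ℕ} (hm : 2 ≤ m) (hℓ : 1 ≤ ℓ) : ancBelow m ℓ ∈ Set.Ico 1 m := by
  induction ℓ using Nat.strong_induction_on with
  | _ ℓ ih =>
    rw [ancBelow]
    split_ifs with h
    · exact ⟨hℓ, by omega⟩
    · exact ih _ (by omega) (by omega)

theorem ancBelow_of_succ {n ℓ : ℕ} (hn : 2 ≤ n) :
    ancBelow n ℓ = if ancBelow (n + 1) ℓ = n then n / 2 else ancBelow (n + 1) ℓ := by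
  induction ℓ using Nat.strong_induction_on with
  | _ ℓ ih =>
    rcases lt_trichotomy ℓ n with hlt | rfl | hgt
    · simp [ancBelow_of_lt hlt, ancBelow_of_lt (Nat.lt_succ_of_lt hlt), hlt.ne]
    · simp [ancBelow_of_lt (Nat.lt_succ_self ℓ), ancBelow_of_le hn le_rfl,
        ancBelow_of_lt (show ℓ / 2 < ℓ by omega)]
    · rw [ancBelow_of_le (by omega) hgt.le, ih _ (by omega), ancBelow_of_le (by omega) hgt]

theorem sum_Ico_two_mul {α : Type*} [AddCommMonoid α] (F : ℕ → α) {a b : ℕ} (hab : a ≤ b) :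
    ∑ v ∈ Ico (2 * a) (2 * b), F v = ∑ v ∈ Ico a b, (F (2 * v) + F (2 * v + 1)) := by
  induction b, hab using Nat.le_induction with
  | base => simp
  | succ b hab ih =>
    rw [show 2 * (b + 1) = 2 * b + 1 + 1 by ring, sum_Ico_succ_top (by omega),
      sum_Ico_succ_top (by omega), ih, sum_Ico_succ_top hab, add_assoc]

theorem IsUnitFlow.sum_Ico_pow {h : ℕ} {Ψ : ℕ → ℝ} (hΨ : IsUnitFlow h Ψ) {m : ℕ} (hm : m ≤ h) :
    ∑ v ∈ Ico (2 ^ m) (2 ^ (m + 1)), Ψ v = 1 := by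
  induction m with
  | zero => simpa using hΨ.1
  | succ m ih =>
    rw [pow_succ' 2 (m + 1), pow_succ', sum_Ico_two_mul _ (by omega), ← pow_succ',
      ← ih (by omega)]
    refine sum_congr rfl fun v hv => (hΨ.2.2 v ?_ ?_).symm
    · exact Nat.one_le_two_pow.trans (mem_Ico.mp hv).1
    · exact (mem_Ico.mp hv).2.trans_le (Nat.pow_le_pow_right two_pos hm)

section TreeMarginal

variable {Φ : Type*} {h : ℕ}

def edgeProd (h : ℕ) (M : ℕ → Matrix Φ Φ ℝ) (n : ℕ) (x : Fin (2 ^ (h + 1) - 1) → Φ) : ℝ :=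
  ∏ v ∈ Ico 2 n, M v (x (idx h (v / 2))) (x (idx h v))

theorem edgeProd_two (M : ℕ → Matrix Φ Φ ℝ) (x : Fin (2 ^ (h + 1) - 1) → Φ) :
    edgeProd h M 2 x = 1 := by
  simp [edgeProd]

theorem edgeProd_succ (M : ℕ → Matrix Φ Φ ℝ) {n : ℕ} (hn : 2 ≤ n)
    (x : Fin (2 ^ (h + 1) - 1) → Φ) :
    edgeProd h M (n + 1) x = edgeProd h M n x * M n (x (idx h (n / 2))) (x (idx h n)) :=
  prod_Ico_succ_top hn _

theorem update_idx_apply_of_lt {v n : ℕ} (hv : 1 ≤ v) (hvn : v < n) (hn : n < 2 ^ (h + 1))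
    (x : Fin (2 ^ (h + 1) - 1) → Φ) (c : Φ) :
    Function.update x (idx h n) c (idx h v) = x (idx h v) :=
  Function.update_of_ne ((idx_injOn h).ne ⟨hv, by omega⟩ ⟨by omega, hn⟩ hvn.ne) _ _

theorem edgeProd_update (M : ℕ → Matrix Φ Φ ℝ) {n : ℕ} (hn : n < 2 ^ (h + 1))
    (x : Fin (2 ^ (h + 1) - 1) → Φ) (c : Φ) :
    edgeProd h M n (Function.update x (idx h n) c) = edgeProd h M n x := by
  refine prod_congr rfl fun v hv => ?_
  obtain ⟨hv2, hvn⟩ := mem_Ico.mp hv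
  rw [update_idx_apply_of_lt (by omega) (by omega) hn,
    update_idx_apply_of_lt (by omega) hvn hn]

variable [Fintype Φ] {M : ℕ → Matrix Φ Φ ℝ} {τ : ℕ → ℝ} {f : Φ → ℝ}

theorem card_mul_sum_edgeProd_succ (hM : ∀ v, M v *ᵥ 1 = 1)
    (hMf : ∀ v, M v *ᵥ f = Real.exp (-τ v) • f) (g : Φ → ℝ) {ℓ n : ℕ} (hℓ : 1 ≤ ℓ)
    (hn : 2 ≤ n) (hnh : n < 2 ^ (h + 1)) :
    Fintype.card Φ * ∑ x, g (x (idx h 1)) * edgeProd h M (n + 1) x *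
        f (x (idx h (ancBelow (n + 1) ℓ)))
      = (if ancBelow (n + 1) ℓ = n then Real.exp (-τ n) else 1) *
        ∑ x, g (x (idx h 1)) * edgeProd h M n x * f (x (idx h (ancBelow n ℓ))) := by
  have hfix (x : Fin (2 ^ (h + 1) - 1) → Φ) (c : Φ) {v : ℕ} (hv : 1 ≤ v) (hvn : v < n) :=
    update_idx_apply_of_lt hv hvn hnh x c
  simp_rw [edgeProd_succ M hn, ancBelow_of_succ hn (ℓ := ℓ)]
  split_ifs with hon
  · have hpeel := card_mul_sum_eq_sum_sum (idx h n) (H := fun x c =>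
      g (x (idx h 1)) * (edgeProd h M n x * M n (x (idx h (n / 2))) c) * f c)
      (fun x c d => by simp only [hfix x c le_rfl (by omega),
        hfix x c (by omega) (by omega : n / 2 < n), edgeProd_update M hnh])
    have hrow (a : Φ) : ∑ c, M n a c * f c = Real.exp (-τ n) * f a := by
      simpa [mulVec, dotProduct] using congrFun (hMf n) a
    rw [hon, hpeel, mul_sum]
    refine sum_congr rfl fun x _ => ?_
    simp only [mul_assoc, ← mul_sum, hrow]
    ring
  · obtain ⟨ha, ha'⟩ := ancBelow_mem_Ico (m := n + 1) (by omega) hℓ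
    have hpeel := card_mul_sum_eq_sum_sum (idx h n) (H := fun x c =>
      g (x (idx h 1)) * (edgeProd h M n x * M n (x (idx h (n / 2))) c) *
        f (x (idx h (ancBelow (n + 1) ℓ))))
      (fun x c d => by simp only [hfix x c le_rfl (by omega),
        hfix x c (by omega) (by omega : n / 2 < n),
        hfix x c ha (by omega : ancBelow (n + 1) ℓ < n), edgeProd_update M hnh])
    have hrow (a : Φ) : ∑ c, M n a c = 1 := by
      simpa [mulVec, dotProduct] using congrFun (hM n) a
    rw [one_mul, hpeel]
    refine sum_congr rfl fun x _ => ?_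
    rw [← sum_mul, ← mul_sum, ← mul_sum, hrow, mul_one]

/-- The coordinates of the vertices `n, …, 2 ^ (h + 1) - 1` are still free, whence the power of
`Fintype.card Φ`. -/
theorem sum_mul_edgeProd_mul_ancBelow [Nonempty Φ] (hM : ∀ v, M v *ᵥ 1 = 1)
    (hMf : ∀ v, M v *ᵥ f = Real.exp (-τ v) • f) (g : Φ → ℝ) {ℓ n : ℕ} (hℓ : 1 ≤ ℓ)
    (hn : 2 ≤ n) (hnh : n ≤ 2 ^ (h + 1)) :
    ∑ x, g (x (idx h 1)) * edgeProd h M n x * f (x (idx h (ancBelow n ℓ)))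
      = Fintype.card Φ ^ (2 ^ (h + 1) - n) *
        (Real.exp (-pathSum τ 1 (ancBelow n ℓ)) * ∑ a, g a * f a) := by
  induction n, hn using Nat.le_induction with
  | base =>
    have hN : 2 ^ (h + 1) - 1 - 1 = 2 ^ (h + 1) - 2 := by omega
    simpa [ancBelow_two hℓ, edgeProd_two, pathSum_one_one, Fintype.piFinset_univ, hN]
      using Fintype.sum_piFinset_apply (fun a => g a * f a) univ (idx h 1)
  | succ n hn ih =>
    refine mul_left_cancel₀ (Nat.cast_ne_zero.mpr (Fintype.card_ne_zero (α := Φ))) ?_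
    rw [card_mul_sum_edgeProd_succ hM hMf g hℓ hn (by omega), ih (by omega),
      ancBelow_of_succ hn, show 2 ^ (h + 1) - n = 2 ^ (h + 1) - (n + 1) + 1 by omega, pow_succ]
    split_ifs with hon
    · rw [hon, pathSum_one_of_two_le τ hn, neg_add, Real.exp_add]
      ring
    · ring

theorem sum_mul_edgeProd_mul_apply [Nonempty Φ] (hM : ∀ v, M v *ᵥ 1 = 1)
    (hMf : ∀ v, M v *ᵥ f = Real.exp (-τ v) • f) (g : Φ → ℝ) {ℓ : ℕ} (hℓ : 1 ≤ ℓ)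
    (hℓh : ℓ < 2 ^ (h + 1)) :
    ∑ x, g (x (idx h 1)) * edgeProd h M (2 ^ (h + 1)) x * f (x (idx h ℓ))
      = Real.exp (-pathSum τ 1 ℓ) * ∑ a, g a * f a := by
  simpa [ancBelow_of_lt hℓh] using
    sum_mul_edgeProd_mul_ancBelow hM hMf g hℓ (Nat.le_self_pow (Nat.succ_ne_zero h) 2) le_rfl

theorem sum_mul_edgeProd_mul_estS [DecidableEq Φ] [Nonempty Φ] {Ψ : ℕ → ℝ}
    (hM : ∀ v, M v *ᵥ 1 = 1) (hMf : ∀ v, M v *ᵥ f = Real.exp (-τ v) • f)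
    (hΨ : IsUnitFlow h Ψ) (g : Φ → ℝ) :
    ∑ x, g (x (idx h 1)) * edgeProd h M (2 ^ (h + 1)) x * estS h f τ Ψ x = ∑ a, g a * f a := by
  calc ∑ x, g (x (idx h 1)) * edgeProd h M (2 ^ (h + 1)) x * estS h f τ Ψ x
      = ∑ ℓ ∈ Ico (2 ^ h) (2 ^ (h + 1)), Ψ ℓ * Real.exp (pathSum τ 1 ℓ) *
          ∑ x, g (x (idx h 1)) * edgeProd h M (2 ^ (h + 1)) x * f (x (idx h ℓ)) := by
        simp only [estS, mul_sum]
        rw [sum_comm]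
        exact sum_congr rfl fun ℓ _ => sum_congr rfl fun x _ => by ring
    _ = ∑ ℓ ∈ Ico (2 ^ h) (2 ^ (h + 1)), Ψ ℓ * ∑ a, g a * f a := by
        refine sum_congr rfl fun ℓ hℓ => ?_
        obtain ⟨hℓ1, hℓ2⟩ := mem_Ico.mp hℓ
        rw [sum_mul_edgeProd_mul_apply hM hMf g (Nat.one_le_two_pow.trans hℓ1) hℓ2, ← mul_assoc,
          mul_assoc (Ψ ℓ), ← Real.exp_add, add_neg_cancel, Real.exp_zero, mul_one]
    _ = ∑ a, g a * f a := by rw [← sum_mul, hΨ.sum_Ico_pow le_rfl, one_mul]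

end TreeMarginal

theorem weighted_majority_mean_general {Φ : Type*} [Fintype Φ] [DecidableEq Φ]
    (Q : Matrix Φ Φ ℝ) (π ν : Φ → ℝ)
    (hQrow : ∀ i, ∑ j : Φ, Q i j = 0)
    (hrev : ∀ i j, π i * Q i j = π j * Q j i)
    (hν : Q.mulVec ν = -ν) :
    ∀ h : ℕ, 1 ≤ h →
    ∀ τ : ℕ → ℝ, (∀ v, 2 ≤ v → v < 2 ^ (h + 1) → 0 < τ v) →
    ∀ Ψ : ℕ → ℝ, IsUnitFlow h Ψ →
      (∀ i : Φ,
        ∑ x : Fin (2 ^ (h + 1) - 1) → Φ,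
          (if x (idx h 1) = i then gtrP h π Q τ x * estS h ν τ Ψ x else 0) =
            π i * ν i) ∧
      ∑ x : Fin (2 ^ (h + 1) - 1) → Φ, gtrP h π Q τ x * estS h ν τ Ψ x = 0 := by
  intro h _ τ _ Ψ hΨ
  have hcond (i : Φ) : ∑ x : Fin (2 ^ (h + 1) - 1) → Φ,
      (if x (idx h 1) = i then gtrP h π Q τ x * estS h ν τ Ψ x else 0) = π i * ν i := by
    have : Nonempty Φ := ⟨i⟩
    have hmean := sum_mul_edgeProd_mul_estS (matExp_smul_mulVec_one hQrow <| τ ·)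
      (matExp_smul_mulVec_of_mulVec_eq_neg hν <| τ ·) hΨ (fun a => if a = i then π i else 0)
    simp only [ite_mul, zero_mul, sum_ite_eq', mem_univ, if_true] at hmean
    rw [← hmean]
    refine sum_congr rfl fun x _ => ?_
    split_ifs with hx
    · rw [gtrP, edgeProd, hx]
    · rfl
  refine ⟨hcond, ?_⟩
  calc ∑ x : Fin (2 ^ (h + 1) - 1) → Φ, gtrP h π Q τ x * estS h ν τ Ψ x
      = ∑ i, ∑ x : Fin (2 ^ (h + 1) - 1) → Φ,
          (if x (idx h 1) = i then gtrP h π Q τ x * estS h ν τ Ψ x else 0) := by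
        rw [sum_comm]
        simp
    _ = π ⬝ᵥ ν := sum_congr rfl fun i _ => hcond i
    _ = 0 := dotProduct_eq_zero_of_mulVec_eq_neg (vecMul_eq_zero_of_reversible hQrow hrev) hν

/-- (Weighted Majority: GTR Version, mean part.) For every depth `h ≥ 1`, positive edge
weights, and unit flow `Ψ`: (i) `E[S | ξ_ρ = i] = ν_i`, i.e.
`∑_{x : x_ρ = i} P(x) S(x) = π_i ν_i` for each state `i`; and (ii) `E[S] = 0`. -/
theorem weighted_majority_mean {Φ : Type*} [Fintype Φ] [DecidableEq Φ]
    (hcard : 2 ≤ Fintype.card Φ)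
    (Q : Matrix Φ Φ ℝ) (π ν : Φ → ℝ)
    (hQoff : ∀ i j, i ≠ j → 0 < Q i j)
    (hQrow : ∀ i, ∑ j : Φ, Q i j = 0)
    (hπpos : ∀ i, 0 < π i)
    (hπsum : ∑ i : Φ, π i = 1)
    (hrev : ∀ i j, π i * Q i j = π j * Q j i)
    (hν : Q.mulVec ν = -ν)
    (hnorm : ∑ i : Φ, π i * ν i ^ 2 = 1) :
    ∀ h : ℕ, 1 ≤ h →
    ∀ τ : ℕ → ℝ, (∀ v, 2 ≤ v → v < 2 ^ (h + 1) → 0 < τ v) →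
    ∀ Ψ : ℕ → ℝ, IsUnitFlow h Ψ →
      (∀ i : Φ,
        ∑ x : Fin (2 ^ (h + 1) - 1) → Φ,
          (if x (idx h 1) = i then gtrP h π Q τ x * estS h ν τ Ψ x else 0) =
            π i * ν i) ∧
      ∑ x : Fin (2 ^ (h + 1) - 1) → Φ, gtrP h π Q τ x * estS h ν τ Ψ x = 0 :=
  weighted_majority_mean_general Q π ν hQrow hrev hν
end

section
/- (Lemma 'Recursion Step'.) For every f > 0 there exists a constant c > 0, depending only on Q and f, such that for every τ ≥ f, every i ∈ Φ, and every x ∈ ℝ: ∑_{j∈Φ} (exp(τQ))_{ij} exp(ν_j x) ≤ exp( e^{−τ} ν_i x + (1/2) c (1 − e^{−2τ}) x² ). -/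
/-!
Row `i` of `exp(τQ)` is a probability vector: its entries are nonnegative because the
off-diagonal entries of `Q` are, and its row sums are `1` because `Q` kills constants. Since `ν`
is an eigenvector, the mean of `ν` under this distribution is `e^{-τ} ν_i`. Hoeffding's lemma for
the values `ν_j ∈ [-‖ν‖, ‖ν‖]` then bounds the moment generating function by
`exp (e^{-τ} ν_i x + ‖ν‖² x² / 2)`, and for `τ ≥ f` the factor `1 - e^{-2τ}` is at least
`1 - e^{-2f} > 0`, so `‖ν‖²` is absorbed into `c (1 - e^{-2τ})`.
-/

open scoped BigOperators

section MatrixExponential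

open Matrix Real

variable {ι : Type*} [Fintype ι] [DecidableEq ι]

lemma hasSum_matExp (A : Matrix ι ι ℝ) :
    HasSum (fun n => (n.factorial⁻¹ : ℝ) • A ^ n) (matExp A) := by
  let _ : NormedRing (Matrix ι ι ℝ) := Matrix.linftyOpNormedRing
  let _ : NormedAlgebra ℝ (Matrix ι ι ℝ) := Matrix.linftyOpNormedAlgebra
  exact NormedSpace.exp_series_hasSum_exp' A

lemma matExp_mulVec_of_mulVec_eq_smul_s5 {A : Matrix ι ι ℝ} {v : ι → ℝ} {t : ℝ}
    (h : A *ᵥ v = t • v) : matExp A *ᵥ v = exp t • v := by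
  have hpow (n : ℕ) : A ^ n *ᵥ v = t ^ n • v := by
    induction n with
    | zero => simp
    | succ n ih => rw [pow_succ', ← mulVec_mulVec, ih, mulVec_smul, h, smul_smul, ← pow_succ]
  let mulVecRight : Matrix ι ι ℝ →+ (ι → ℝ) :=
    AddMonoidHom.mk' (· *ᵥ v) fun A B => add_mulVec A B v
  have hseries := (hasSum_matExp A).map mulVecRight
    (continuous_id.matrix_mulVec continuous_const)
  have hscalar := (NormedSpace.expSeries_div_hasSum_exp t).smul_const v
  rw [← Real.exp_eq_exp_ℝ] at hscalar
  refine hseries.unique (hscalar.congr_fun fun n => ?_)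
  simp [mulVecRight, smul_mulVec, hpow, smul_smul, div_eq_inv_mul]

lemma sum_matExp_apply_eq_one {A : Matrix ι ι ℝ} (hA : ∀ i, ∑ j, A i j = 0) (i : ι) :
    ∑ j, matExp A i j = 1 := by
  have h := matExp_mulVec_of_mulVec_eq_smul_s5 (A := A) (v := fun _ => 1) (t := 0) <| by
    ext i; simp [mulVec, dotProduct, hA]
  simpa [mulVec, dotProduct] using congrFun h i

lemma matExp_apply_nonneg {B : Matrix ι ι ℝ} (hB : ∀ i j, 0 ≤ B i j) (i j : ι) :
    0 ≤ matExp B i j := by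
  have hpow (n : ℕ) : ∀ i j, 0 ≤ (B ^ n) i j := by
    induction n with
    | zero => intro i j; by_cases h : i = j <;> simp [one_apply, h]
    | succ n ih =>
      intro i j
      rw [pow_succ, mul_apply]
      exact Finset.sum_nonneg fun k _ => mul_nonneg (ih i k) (hB k j)
  exact (Pi.hasSum.1 (Pi.hasSum.1 (hasSum_matExp B) i) j).nonneg
    fun n => mul_nonneg (by positivity) (hpow n i j)

lemma matExp_add_smul_one (A : Matrix ι ι ℝ) (r : ℝ) :
    matExp (A + r • 1) = exp r • matExp A := by
  have hcomm : Commute A (r • 1) := (Commute.one_right A).smul_right r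
  rw [matExp, Matrix.exp_add_of_commute _ _ hcomm, smul_one_eq_diagonal, exp_diagonal,
    Pi.exp_def, ← Real.exp_eq_exp_ℝ, ← smul_one_eq_diagonal, mul_smul_one, matExp]

/-- Shifting by a multiple of the identity makes `A` entrywise nonnegative, and only rescales its
exponential by a positive factor. -/
lemma matExp_apply_nonneg_of_offDiag_nonneg {A : Matrix ι ι ℝ}
    (hA : ∀ i j, i ≠ j → 0 ≤ A i j) (i j : ι) : 0 ≤ matExp A i j := by
  obtain ⟨r, hr⟩ := Finite.exists_le fun k => -A k k
  have hshift : ∀ i j, 0 ≤ (A + r • 1) i j := by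
    intro i j
    by_cases h : i = j
    · subst h; simpa using neg_le_iff_add_nonneg'.1 (hr i)
    · simpa [one_apply_ne h] using hA i j h
  have h := matExp_apply_nonneg hshift i j
  rw [matExp_add_smul_one, Matrix.smul_apply, smul_eq_mul] at h
  exact (mul_nonneg_iff_of_pos_left (exp_pos r)).1 h

end MatrixExponential

section Hoeffding

open MeasureTheory ProbabilityTheory Real

/-- Hoeffding's lemma, for the law `∑ j, p j • δ_j` of `v`. -/
lemma sum_mul_exp_le_of_abs_le {ι : Type*} [Fintype ι] {p v : ι → ℝ} (hp : ∀ j, 0 ≤ p j)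
    (hp1 : ∑ j, p j = 1) {M : ℝ} (hv : ∀ j, |v j| ≤ M) (x : ℝ) :
    ∑ j, p j * exp (v j * x) ≤ exp ((∑ j, p j * v j) * x + M ^ 2 * x ^ 2 / 2) := by
  let _ : MeasurableSpace ι := ⊤
  let μ : PMF ι := PMF.ofFintype (fun j => ENNReal.ofReal (p j)) <| by
    rw [← ENNReal.ofReal_sum_of_nonneg fun j _ => hp j, hp1, ENNReal.ofReal_one]
  have hintegral (g : ι → ℝ) : ∫ j, g j ∂μ.toMeasure = ∑ j, p j * g j := by
    simp [PMF.integral_eq_sum, μ, ENNReal.toReal_ofReal (hp _)]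
  have hoeffding := (hasSubgaussianMGF_of_mem_Icc (μ := μ.toMeasure) (X := v) (a := -M) (b := M)
    Measurable.of_discrete.aemeasurable (ae_of_all _ fun j => abs_le.1 (hv j))).mgf_le x
  set m := ∫ j, v j ∂μ.toMeasure
  set S := ∑ j, p j * exp (v j * x)
  have hmgf : mgf (fun j => v j - m) μ.toMeasure x = exp (-(m * x)) * S := by
    simp only [mgf, hintegral, S, Finset.mul_sum]
    refine Finset.sum_congr rfl fun j _ => ?_
    rw [mul_left_comm, ← exp_add]
    ring_nf
  have hproxy : (((‖M - -M‖₊ / 2) ^ 2 : NNReal) : ℝ) = M ^ 2 := by simp [← two_mul]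
  rw [hmgf, hproxy] at hoeffding
  rw [← hintegral v]
  calc S = exp (m * x) * (exp (-(m * x)) * S) := by rw [← mul_assoc, ← exp_add]; simp
    _ ≤ exp (m * x) * exp (M ^ 2 * x ^ 2 / 2) := by gcongr
    _ = exp (m * x + M ^ 2 * x ^ 2 / 2) := (exp_add _ _).symm

end Hoeffding

theorem recursion_step_general {Φ : Type*} [Fintype Φ] [DecidableEq Φ]
    (Q : Matrix Φ Φ ℝ) (ν : Φ → ℝ)
    (hQoff : ∀ i j, i ≠ j → 0 < Q i j)
    (hQrow : ∀ i, ∑ j : Φ, Q i j = 0)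
    (hν : Q.mulVec ν = -ν) :
    ∀ f : ℝ, 0 < f → ∃ c : ℝ, 0 < c ∧
      ∀ τ : ℝ, f ≤ τ → ∀ i : Φ, ∀ x : ℝ,
        ∑ j : Φ, (matExp (τ • Q)) i j * Real.exp (ν j * x) ≤
          Real.exp (Real.exp (-τ) * ν i * x +
            (1 / 2) * c * (1 - Real.exp (-(2 * τ))) * x ^ 2) := by
  intro f hf
  have hgap : 0 < 1 - Real.exp (-(2 * f)) := sub_pos.2 (Real.exp_lt_one_iff.2 (by linarith))
  set c := (‖ν‖ ^ 2 + 1) / (1 - Real.exp (-(2 * f)))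
  refine ⟨c, by positivity, fun τ hτ i x => ?_⟩
  have hoff : ∀ a b, a ≠ b → 0 ≤ (τ • Q) a b :=
    fun a b hab => mul_nonneg (hf.trans_le hτ).le (hQoff a b hab).le
  have hrow : ∀ a, ∑ b, (τ • Q) a b = 0 := fun a => by simp [← Finset.mul_sum, hQrow]
  have hmean : ∑ j, matExp (τ • Q) i j * ν j = Real.exp (-τ) * ν i :=
    congrFun (matExp_mulVec_of_mulVec_eq_smul_s5 <| by
      rw [Matrix.smul_mulVec, hν, smul_neg, neg_smul]) i
  have hproxy : ‖ν‖ ^ 2 ≤ c * (1 - Real.exp (-(2 * τ))) := calc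
    ‖ν‖ ^ 2 ≤ c * (1 - Real.exp (-(2 * f))) := by rw [div_mul_cancel₀ _ hgap.ne']; linarith
    _ ≤ c * (1 - Real.exp (-(2 * τ))) := by gcongr
  calc _ ≤ Real.exp ((∑ j, matExp (τ • Q) i j * ν j) * x + ‖ν‖ ^ 2 * x ^ 2 / 2) :=
        sum_mul_exp_le_of_abs_le (matExp_apply_nonneg_of_offDiag_nonneg hoff i)
          (sum_matExp_apply_eq_one hrow i) (fun j => by simpa using norm_le_pi_norm ν j) x
    _ ≤ _ := by
      rw [hmean]
      gcongr
      nlinarith [mul_le_mul_of_nonneg_right hproxy (sq_nonneg x)]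

/-- (Recursion Step.) For every `f > 0` there is `c > 0`, depending only on `Q` and `f`,
such that for every `τ ≥ f`, every state `i` and every `x ∈ ℝ`:
`∑_j (exp(τQ))_{ij} exp(ν_j x) ≤ exp(e^{−τ} ν_i x + (1/2) c (1 − e^{−2τ}) x²)`. -/
theorem recursion_step {Φ : Type*} [Fintype Φ] [DecidableEq Φ]
    (hcard : 2 ≤ Fintype.card Φ)
    (Q : Matrix Φ Φ ℝ) (π ν : Φ → ℝ)
    (hQoff : ∀ i j, i ≠ j → 0 < Q i j)
    (hQrow : ∀ i, ∑ j : Φ, Q i j = 0)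
    (hπpos : ∀ i, 0 < π i)
    (hπsum : ∑ i : Φ, π i = 1)
    (hrev : ∀ i j, π i * Q i j = π j * Q j i)
    (hν : Q.mulVec ν = -ν)
    (hnorm : ∑ i : Φ, π i * ν i ^ 2 = 1) :
    ∀ f : ℝ, 0 < f → ∃ c : ℝ, 0 < c ∧
      ∀ τ : ℝ, f ≤ τ → ∀ i : Φ, ∀ x : ℝ,
        ∑ j : Φ, (matExp (τ • Q)) i j * Real.exp (ν j * x) ≤
          Real.exp (Real.exp (-τ) * ν i * x +
            (1 / 2) * c * (1 - Real.exp (-(2 * τ))) * x ^ 2) :=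
  recursion_step_general Q ν hQoff hQrow hν
end

section
/- (Uniform bound on K_Ψ in the Kesten–Stigum zone.) Let g* = ln √2 and let 0 < g < g*. For every integer h ≥ 1 and every edge-weight assignment with 0 < τ_v ≤ g for all nonempty v, the homogeneous unit flow Ψ(v) = 2^{−|v|} (where |v| is the length of the string v) satisfies K_Ψ ≤ 1 / (1 − e^{−2(g* − g)}). In particular the bound is independent of h. -/
open scoped BigOperators

/-!
Since `1 - e^{-2τ_v} ≤ 1` and `τ(ρ, v) ≤ |v| g`, the term of a vertex at depth `m` is at most
`(e^{2g} / 4)^m`. The `2^m` vertices at depth `m` therefore contribute at most `r^m`, where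
`r = e^{2g} / 2 = e^{-2(g* - g)} < 1`, and the geometric series bounds `K_Ψ` by
`r / (1 - r) ≤ 1 / (1 - r)`.
-/

open Finset Real

lemma pathSum_le_log_mul {τ : ℕ → ℝ} {g : ℝ} (v : ℕ) (hτ : ∀ w, 2 ≤ w → w ≤ v → τ w ≤ g) :
    pathSum τ 1 v ≤ Nat.log 2 v * g := by
  induction v using Nat.strong_induction_on with
  | _ v ih =>
    rw [pathSum]
    split_ifs with hv
    · simp [Nat.log_of_lt (by omega : v < 2)]
    · have h2 : 2 ≤ v := by omega
      have hparent := ih (v / 2) (by omega) fun w hw hwv => hτ w hw (by omega)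
      rw [Nat.log_of_one_lt_of_le one_lt_two h2]
      push_cast
      linarith [hτ v h2 le_rfl]

lemma sum_Ico_two_pow_succ_comp_log {M : Type*} [AddCommMonoid M] (f : ℕ → M) (m : ℕ) :
    ∑ v ∈ Ico (2 ^ m) (2 ^ (m + 1)), f (Nat.log 2 v) = 2 ^ m • f m := by
  rw [sum_congr rfl fun v hv =>
      congrArg f (Nat.log_eq_of_pow_le_of_lt_pow (mem_Ico.1 hv).1 (mem_Ico.1 hv).2),
    sum_const, Nat.card_Ico, pow_succ, mul_two, Nat.add_sub_cancel]

lemma sum_Ico_two_pow_comp_log {M : Type*} [AddCommMonoid M] (f : ℕ → M) {a b : ℕ}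
    (hab : a ≤ b) :
    ∑ v ∈ Ico (2 ^ a) (2 ^ b), f (Nat.log 2 v) = ∑ m ∈ Ico a b, 2 ^ m • f m := by
  induction b, hab using Nat.le_induction with
  | base => simp
  | succ b hab ih =>
    rw [← sum_Ico_consecutive _ (Nat.pow_le_pow_right two_pos hab)
        (Nat.pow_le_pow_right two_pos b.le_succ), ih, sum_Ico_two_pow_succ_comp_log,
      sum_Ico_succ_top hab]

lemma one_sub_exp_neg_mul_exp_mul_inv_two_pow_sq_le {t p g : ℝ} {m : ℕ} (hp : p ≤ m * g) :
    (1 - exp (-t)) * exp (2 * p) * ((2 : ℝ) ^ m)⁻¹ ^ 2 ≤ (exp (2 * g) / 4) ^ m := by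
  have hfactor : 1 - exp (-t) ≤ 1 := by linarith [exp_pos (-t)]
  calc (1 - exp (-t)) * exp (2 * p) * ((2 : ℝ) ^ m)⁻¹ ^ 2
      ≤ 1 * exp (2 * (m * g)) * ((2 : ℝ) ^ m)⁻¹ ^ 2 := by gcongr
    _ = (exp (2 * g) / 4) ^ m := by
        rw [mul_left_comm, exp_nat_mul, one_mul, div_pow, div_eq_mul_inv, ← inv_pow,
          ← pow_mul, mul_comm m, pow_mul, ← inv_pow]
        norm_num

lemma exp_neg_two_mul_log_sqrt_two_sub (g : ℝ) :
    exp (-(2 * (log √2 - g))) = exp (2 * g) / 2 := by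
  rw [log_sqrt zero_le_two, show -(2 * (log 2 / 2 - g)) = 2 * g - log 2 by ring, exp_sub,
    exp_log two_pos]

theorem kflow_uniform_bound_general (g : ℝ) (hg : g < Real.log (Real.sqrt 2)) :
    ∀ h : ℕ, 1 ≤ h →
    ∀ τ : ℕ → ℝ, (∀ v, 2 ≤ v → v < 2 ^ (h + 1) → 0 < τ v ∧ τ v ≤ g) →
      Kflow h τ (fun v => ((2 : ℝ) ^ Nat.log2 v)⁻¹) ≤
        1 / (1 - Real.exp (-(2 * (Real.log (Real.sqrt 2) - g)))) := by
  intro h hh τ hτ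
  have hr1 : exp (2 * g) / 2 < 1 := by
    rw [← exp_neg_two_mul_log_sqrt_two_sub, exp_lt_one_iff]
    linarith
  rw [exp_neg_two_mul_log_sqrt_two_sub, Kflow]
  simp only [Nat.log2_eq_log_two]
  calc _ ≤ ∑ v ∈ Ico (2 ^ 1) (2 ^ (h + 1)), (exp (2 * g) / 4) ^ Nat.log 2 v := by
        refine sum_le_sum fun v hv => one_sub_exp_neg_mul_exp_mul_inv_two_pow_sq_le ?_
        exact pathSum_le_log_mul v fun w hw hwv => (hτ w hw (by simp at hv; omega)).2
    _ = ∑ m ∈ Ico 1 (h + 1), (exp (2 * g) / 2) ^ m := by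
        rw [sum_Ico_two_pow_comp_log _ (by omega)]
        refine sum_congr rfl fun m _ => ?_
        rw [nsmul_eq_mul, Nat.cast_pow, ← mul_pow]
        ring
    _ ≤ (exp (2 * g) / 2) ^ 1 / (1 - exp (2 * g) / 2) :=
        geom_sum_Ico_le_of_lt_one (by positivity) hr1
    _ ≤ 1 / (1 - exp (2 * g) / 2) := by
        gcongr
        linarith

/-- (Uniform bound on `K_Ψ` in the Kesten–Stigum zone.) Let `g* = ln √2` and
`0 < g < g*`. For every depth `h ≥ 1` and edge weights with `0 < τ_v ≤ g`, the
homogeneous unit flow `Ψ(v) = 2^{−|v|}` (where `|v| = log₂ v` is the string length of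
`v`) satisfies `K_Ψ ≤ 1 / (1 − e^{−2(g* − g)})`, a bound independent of `h`. -/
theorem kflow_uniform_bound (g : ℝ) (hg0 : 0 < g) (hg : g < Real.log (Real.sqrt 2)) :
    ∀ h : ℕ, 1 ≤ h →
    ∀ τ : ℕ → ℝ, (∀ v, 2 ≤ v → v < 2 ^ (h + 1) → 0 < τ v ∧ τ v ≤ g) →
      Kflow h τ (fun v => ((2 : ℝ) ^ Nat.log2 v)⁻¹) ≤
        1 / (1 - Real.exp (-(2 * (Real.log (Real.sqrt 2) - g)))) :=
  kflow_uniform_bound_general g hg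
end
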